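/- Let A be an invertible 2×2 real matrix with det A > 0, and let F : ℝ → ℝ be a continuous monotone (increasing) lift of the circle homeomorphism induced by A, i.e. F(t+1) = F(t)+1 and A·e(t)/‖A·e(t)‖ = e(F(t)) for all t ∈ ℝ, where e(t) = (cos(2πt), sin(2πt)). Then the rotation number lim_{n→∞} Fⁿ(0)/n is rational if and only if there exist an integer n ≥ 1, a nonzero vector v ∈ ℝ², and μ ∈ ℝ such that Aⁿ v = μ·v (i.e., some iterate of A has a real eigenvector). -/

import Mathlib

/-!
A linear map `f` of the plane and a lift `F` of its action on rays satisfy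
`fⁿ e(t) = c • e(Fⁿ t)` with `c > 0`. Hence `Fⁿ x = x + k` for some integer `k` exactly when
`e(x)` is an eigenvector of `fⁿ` with positive eigenvalue, and an eigenvector of `fⁿ` for an
eigenvalue `μ` (necessarily nonzero) is one of `f²ⁿ` for the positive eigenvalue `μ²`.
By Poincaré's theory, the rotation number of a continuous lift is rational exactly when some
iterate satisfies `Fⁿ x = x + k`.
-/

open Filter Topology

/-- The plane `ℝ²` with its Euclidean norm. -/
abbrev E2 := EuclideanSpace ℝ (Fin 2)

/-- The point `e(t) = (cos(2πt), sin(2πt))` of the unit circle. -/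
noncomputable def circleVec (t : ℝ) : E2 :=
  WithLp.toLp 2 ![Real.cos (2 * Real.pi * t), Real.sin (2 * Real.pi * t)]

/-- Action of a real `2×2` matrix on `ℝ²`. -/
noncomputable def matAct (A : Matrix (Fin 2) (Fin 2) ℝ) (v : E2) : E2 :=
  WithLp.toLp 2 (A.mulVec v)

open Complex in
lemma circleVec_eq_repr (t : ℝ) :
    circleVec t = orthonormalBasisOneI.repr (exp (↑(2 * Real.pi * t) * I)) := by
  ext i
  fin_cases i <;> simp [circleVec, -ofReal_mul, exp_ofReal_mul_I_re, exp_ofReal_mul_I_im]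

lemma norm_circleVec (t : ℝ) : ‖circleVec t‖ = 1 := by
  rw [circleVec_eq_repr, LinearIsometryEquiv.norm_map, Complex.norm_exp_ofReal_mul_I]

lemma circleVec_ne_zero (t : ℝ) : circleVec t ≠ 0 :=
  ne_zero_of_norm_ne_zero (by rw [norm_circleVec]; exact one_ne_zero)

open Complex in
lemma circleVec_eq_circleVec_iff {a b : ℝ} :
    circleVec a = circleVec b ↔ ∃ k : ℤ, a = b + k := by
  rw [circleVec_eq_repr, circleVec_eq_repr, EmbeddingLike.apply_eq_iff_eq,
    exp_eq_exp_iff_exists_int]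
  refine exists_congr fun k => ?_
  rw [show ((2 * Real.pi * b : ℝ) : ℂ) * I + k * (2 * Real.pi * I) =
      ((2 * Real.pi * (b + k) : ℝ) : ℂ) * I by push_cast; ring,
    mul_left_inj' I_ne_zero, ofReal_inj, mul_right_inj' Real.two_pi_pos.ne']

lemma exists_circleVec_eq {v : E2} (hv : ‖v‖ = 1) : ∃ t, circleVec t = v := by
  set z := Complex.orthonormalBasisOneI.repr.symm v
  have hz : ‖z‖ = 1 := by simp only [z, LinearIsometryEquiv.norm_map, hv]
  refine ⟨Complex.arg z / (2 * Real.pi), ?_⟩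
  rw [circleVec_eq_repr, mul_div_cancel₀ _ Real.two_pi_pos.ne', ← one_mul (Complex.exp _),
    ← Complex.ofReal_one, ← hz, Complex.norm_mul_exp_arg_mul_I,
    LinearIsometryEquiv.apply_symm_apply]

section LinearLift

variable {f : Module.End ℝ E2} {F : ℝ → ℝ}
  (hlift : ∀ t, ‖f (circleVec t)‖⁻¹ • f (circleVec t) = circleVec (F t))
include hlift

lemma exists_pos_apply_circleVec_eq (t : ℝ) :
    ∃ c : ℝ, 0 < c ∧ f (circleVec t) = c • circleVec (F t) := by
  have hne : f (circleVec t) ≠ 0 := fun h => circleVec_ne_zero (F t) <| by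
    rw [← hlift t, h, smul_zero]
  refine ⟨‖f (circleVec t)‖, norm_pos_iff.2 hne, ?_⟩
  rw [← hlift t, smul_inv_smul₀ (norm_ne_zero_iff.2 hne)]

lemma exists_pos_pow_apply_circleVec_eq (n : ℕ) (t : ℝ) :
    ∃ c : ℝ, 0 < c ∧ (f ^ n) (circleVec t) = c • circleVec (F^[n] t) := by
  induction n with
  | zero => exact ⟨1, one_pos, by simp⟩
  | succ n ih =>
    obtain ⟨c, hc, hfc⟩ := ih
    obtain ⟨d, hd, hfd⟩ := exists_pos_apply_circleVec_eq hlift (F^[n] t)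
    refine ⟨c * d, mul_pos hc hd, ?_⟩
    rw [pow_succ', Module.End.mul_apply, hfc, map_smul, hfd, smul_smul,
      Function.iterate_succ_apply']

lemma exists_pos_pow_apply_circleVec_eq_smul_iff (n : ℕ) (t : ℝ) :
    (∃ c : ℝ, 0 < c ∧ (f ^ n) (circleVec t) = c • circleVec t) ↔
      circleVec (F^[n] t) = circleVec t := by
  obtain ⟨c, hc, hfc⟩ := exists_pos_pow_apply_circleVec_eq hlift n t
  rw [hfc]
  constructor
  · rintro ⟨d, hd, h⟩
    have hcd : c = d := by
      simpa [norm_smul, norm_circleVec, abs_of_pos hc, abs_of_pos hd] using congrArg norm h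
    exact smul_right_injective E2 hc.ne' (h.trans (by rw [hcd]))
  · intro h
    exact ⟨c, hc, by rw [h]⟩

theorem exists_eigenvector_pow_iff_exists_iterate_eq_add_int :
    (∃ n, 0 < n ∧ ∃ v ≠ 0, ∃ μ : ℝ, (f ^ n) v = μ • v) ↔
      ∃ n, 0 < n ∧ ∃ x, ∃ k : ℤ, F^[n] x = x + k := by
  constructor
  · rintro ⟨n, hn, v, hv, μ, hμ⟩
    obtain ⟨t, ht⟩ := exists_circleVec_eq (norm_smul_inv_norm (𝕜 := ℝ) hv)
    have hu : (f ^ n) (circleVec t) = μ • circleVec t := by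
      rw [ht, map_smul, hμ, smul_comm]
    have hμ0 : μ ≠ 0 := by
      rintro rfl
      obtain ⟨c, hc, hfc⟩ := exists_pos_pow_apply_circleVec_eq hlift n t
      rw [hu, zero_smul, eq_comm, smul_eq_zero] at hfc
      exact hfc.elim hc.ne' (circleVec_ne_zero _)
    have hu2 : (f ^ (2 * n)) (circleVec t) = (μ * μ) • circleVec t := by
      rw [two_mul, pow_add, Module.End.mul_apply, hu, map_smul, hu, smul_smul]
    obtain ⟨k, hk⟩ := circleVec_eq_circleVec_iff.1
      ((exists_pos_pow_apply_circleVec_eq_smul_iff hlift (2 * n) t).1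
        ⟨μ * μ, mul_self_pos.2 hμ0, hu2⟩)
    exact ⟨2 * n, by omega, t, k, hk⟩
  · rintro ⟨n, hn, x, k, hx⟩
    obtain ⟨c, hc, hfc⟩ := (exists_pos_pow_apply_circleVec_eq_smul_iff hlift n x).2
      (circleVec_eq_circleVec_iff.2 ⟨k, hx⟩)
    exact ⟨n, hn, circleVec x, circleVec_ne_zero x, c, hfc⟩

end LinearLift

theorem CircleDeg1Lift.exists_rat_tendsto_iff_exists_iterate_eq_add_int (f : CircleDeg1Lift)
    (hf : Continuous f) :
    (∃ q : ℚ, Tendsto (fun n : ℕ => f^[n] 0 / n) atTop (𝓝 (q : ℝ))) ↔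
      ∃ n, 0 < n ∧ ∃ x, ∃ k : ℤ, f^[n] x = x + k := by
  have htends (τ : ℝ) :
      Tendsto (fun n : ℕ => (f ^ n) 0 / n) atTop (𝓝 τ) ↔ f.translationNumber = τ :=
    ⟨fun h => f.translationNumber_eq_of_tendsto₀ <| by
        simpa only [CircleDeg1Lift.coe_pow] using h,
      fun h => h ▸ f.tendsto_translation_number₀⟩
  simp only [← CircleDeg1Lift.coe_pow, htends]
  constructor
  · rintro ⟨q, hq⟩
    obtain ⟨x, hx⟩ := (f.translationNumber_eq_rat_iff hf q.pos).1 (by rw [hq, Rat.cast_def])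
    exact ⟨q.den, q.pos, x, q.num, hx⟩
  · rintro ⟨n, hn, x, k, hx⟩
    exact ⟨k / n, by rw [(f.translationNumber_eq_rat_iff hf hn).2 ⟨x, hx⟩]; push_cast; rfl⟩

lemma matAct_pow (A : Matrix (Fin 2) (Fin 2) ℝ) (n : ℕ) :
    matAct (A ^ n) = ⇑(Matrix.toLpLin 2 2 A ^ n) := by
  rw [← Matrix.toLpLin_pow]
  rfl

theorem linear_rotation_number_rational_iff_real_eigenvector_general
    (A : Matrix (Fin 2) (Fin 2) ℝ)
    (F : ℝ → ℝ) (hFc : Continuous F) (hFm : Monotone F)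
    (hFper : ∀ t, F (t + 1) = F t + 1)
    (hFlift : ∀ t, (‖matAct A (circleVec t)‖)⁻¹ • matAct A (circleVec t) =
      circleVec (F t)) :
    (∃ q : ℚ, Tendsto (fun n : ℕ => F^[n] 0 / n) atTop (𝓝 (q : ℝ))) ↔
      (∃ n : ℕ, 1 ≤ n ∧ ∃ v : E2, v ≠ 0 ∧ ∃ μ : ℝ, matAct (A ^ n) v = μ • v) := by
  let g : CircleDeg1Lift := ⟨⟨F, hFm⟩, hFper⟩
  simp only [matAct_pow]
  exact (g.exists_rat_tendsto_iff_exists_iterate_eq_add_int hFc).trans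
    (exists_eigenvector_pow_iff_exists_iterate_eq_add_int
      (f := Matrix.toLpLin 2 2 A) hFlift).symm

/-- For an invertible `2×2` real matrix `A` with positive determinant, the
rotation number of the induced circle homeomorphism is rational if and only if
some iterate of `A` has a real eigenvector. -/
theorem linear_rotation_number_rational_iff_real_eigenvector
    (A : Matrix (Fin 2) (Fin 2) ℝ) (hdet : 0 < A.det)
    (F : ℝ → ℝ) (hFc : Continuous F) (hFm : Monotone F)
    (hFper : ∀ t, F (t + 1) = F t + 1)
    (hFlift : ∀ t, (‖matAct A (circleVec t)‖)⁻¹ • matAct A (circleVec t) =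
      circleVec (F t)) :
    (∃ q : ℚ, Tendsto (fun n : ℕ => F^[n] 0 / n) atTop (𝓝 (q : ℝ))) ↔
      (∃ n : ℕ, 1 ≤ n ∧ ∃ v : E2, v ≠ 0 ∧ ∃ μ : ℝ, matAct (A ^ n) v = μ • v) :=
  linear_rotation_number_rational_iff_real_eigenvector_general A F hFc hFm hFper hFlift
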